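/- Let η be a substitution over A with growing letter b, and let u ∈ A^{ℤ<0} be a left-infinite periodic point of η with u_{-1} = b and period p ≥ 1. For every integer n ≤ −2, there exist a unique integer k divisible by p and a unique b-admissible sequence (m_i, a_i)_{i=0,…,k-1} such that η^{p-1}(m_{k-1}) η^{p-2}(m_{k-2}) ⋯ η^0(m_{k-p}) a_{k-p} ≠ η^p(b) and u_{−|η^k(b)|} ⋯ u_{n-2} u_{n-1} = η^{k-1}(m_{k-1}) η^{k-2}(m_{k-2}) ⋯ η^0(m_0). -/

import Mathlib

open Filter List

variable {A : Type*}

/-- A substitution applied to a word: concatenation of the images of its letters. -/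
def substW (η : A → List A) (w : List A) : List A := (w.map η).flatten

/-- The `k`-th iterate of a substitution applied to a word. -/
def iterW (η : A → List A) (k : ℕ) (w : List A) : List A := (substW η)^[k] w

/-- `η` is a substitution: nonempty images and at least one growing letter. -/
def IsSubstitution (η : A → List A) : Prop :=
  (∀ c, η c ≠ []) ∧ ∃ a, Tendsto (fun k => (iterW η k [a]).length) atTop atTop

/-- `(m i, a i)` for `i = 0, …, len-1` is an `x`-admissible sequence:
`m (i) ++ [a i]` is a prefix of `η (a (i+1))` and `m (len-1) ++ [a (len-1)]`
is a prefix of `η x`. -/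
def AdmSeq (η : A → List A) (len : ℕ) (m : ℕ → List A) (a : ℕ → A) (x : A) : Prop :=
  (∀ i, i + 1 < len → (m i ++ [a i]) <+: η (a (i + 1))) ∧
  (1 ≤ len → (m (len - 1) ++ [a (len - 1)]) <+: η x)

/-- `Σ_{j<k} |η^j(m_j)|`. -/
def sumLen (η : A → List A) (k : ℕ) (m : ℕ → List A) : ℕ :=
  ∑ j ∈ Finset.range k, (iterW η j (m j)).length

/-- `η^{k-1}(m_{k-1}) η^{k-2}(m_{k-2}) ⋯ η^0(m_0)`. -/
def concatDT (η : A → List A) (k : ℕ) (m : ℕ → List A) : List A :=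
  ((List.range k).reverse.map (fun j => iterW η j (m j))).flatten

/-- The digit word `|m_{k-1}| ⊙ |m_{k-2}| ⊙ ⋯ ⊙ |m_0|`. -/
def dtDigits (k : ℕ) (m : ℕ → List A) : List ℕ :=
  (List.range k).reverse.map (fun j => (m j).length)

/-- Partial run of the automaton `A_{η,x}`: from state `x`, the digit `d`
moves to the `d`-th letter of `η x` when `d < |η x|`. -/
def run (η : A → List A) : List ℕ → A → Option A
  | [], x => some x
  | d :: w, x => if h : d < (η x).length then run η w ((η x)[d]) else none

/-- `u` restricted to nonnegative positions is a periodic point of `η` of period `p`: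
every `η^p`-image of a prefix of `u` is again a prefix of `u`. -/
def RightPer (η : A → List A) (p : ℕ) (u : ℤ → A) : Prop :=
  ∀ n : ℕ, ∀ j : ℕ, j < (iterW η p (List.ofFn (fun i : Fin (n+1) => u i))).length →
    (iterW η p (List.ofFn (fun i : Fin (n+1) => u i)))[j]? = some (u j)

/-- `u` restricted to negative positions is a periodic point of `η` of period `p`:
every `η^p`-image of a suffix `u_{-(n+1)} ⋯ u_{-1}` of the left part is again a
suffix of the left part of `u`. -/
def LeftPer (η : A → List A) (p : ℕ) (u : ℤ → A) : Prop :=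
  ∀ n : ℕ, ∀ j : ℕ,
    j < (iterW η p (List.ofFn (fun i : Fin (n+1) => u ((i : ℤ) - (n+1))))).length →
    (iterW η p (List.ofFn (fun i : Fin (n+1) => u ((i : ℤ) - (n+1)))))[j]? =
      some (u ((j : ℤ) -
        (iterW η p (List.ofFn (fun i : Fin (n+1) => u ((i : ℤ) - (n+1))))).length))

/-- `u : ℤ → A` is a two-sided periodic point of `η` of period `p ≥ 1` with
growing seed `u₋₁ | u₀`. -/
def TwoSidedPerPoint (η : A → List A) (p : ℕ) (u : ℤ → A) : Prop :=
  1 ≤ p ∧ RightPer η p u ∧ LeftPer η p u ∧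
  Tendsto (fun k => (iterW η k [u 0]).length) atTop atTop ∧
  Tendsto (fun k => (iterW η k [u (-1)]).length) atTop atTop

/-- The Dumont–Thomas decomposition data of a positive integer `n` with respect to
the letter `x` (Theorem of Dumont–Thomas for the right-infinite part):
`p ∣ k`, `p ≤ k`, the sequence is `x`-admissible, `m_{k-1} ⋯ m_{k-p} ≠ ε` and
`Σ_{j<k} |η^j(m_j)| = n`. -/
def PosSpec (η : A → List A) (p : ℕ) (x : A) (n : ℤ) (k : ℕ) (m : ℕ → List A)
    (a : ℕ → A) : Prop :=
  p ∣ k ∧ p ≤ k ∧ AdmSeq η k m a x ∧ (∃ i, i < p ∧ m (k - 1 - i) ≠ []) ∧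
  (sumLen η k m : ℤ) = n

/-- The Dumont–Thomas decomposition data of an integer `n ≤ -2` with respect to
the letter `b` (Theorem of Dumont–Thomas for the left-infinite part). -/
def NegSpec (η : A → List A) (p : ℕ) (b : A) (n : ℤ) (k : ℕ) (m : ℕ → List A)
    (a : ℕ → A) : Prop :=
  p ∣ k ∧ p ≤ k ∧ AdmSeq η k m a b ∧
  ((List.range p).map (fun i => iterW η (p - 1 - i) (m (k - 1 - i)))).flatten
      ++ [a (k - p)] ≠ iterW η p [b] ∧
  (sumLen η k m : ℤ) = n + (iterW η k [b]).length

/-- `w` is the Dumont–Thomas complement representation `rep_u(n)` of `n ∈ ℤ`. -/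
def RepSpec (η : A → List A) (p : ℕ) (u : ℤ → A) (n : ℤ) (w : List ℕ) : Prop :=
  (n = 0 ∧ w = [0]) ∨ (n = -1 ∧ w = [1]) ∨
  (1 ≤ n ∧ ∃ k m a, PosSpec η p (u 0) n k m a ∧ w = 0 :: dtDigits k m) ∨
  (n ≤ -2 ∧ ∃ k m a, NegSpec η p (u (-1)) n k m a ∧ w = 1 :: dtDigits k m)

/-- Run of the automaton `A_{η,s}` with initial state `start`: the first digit
`0` (resp. `1`) moves to `u 0` (resp. `u (-1)`). -/
def runSeed (η : A → List A) (u : ℤ → A) : List ℕ → Option A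
  | [] => none
  | d :: w => if d = 0 then run η w (u 0) else if d = 1 then run η w (u (-1)) else none

/-- `|η^{k-p-1}(m_{k-1}) ⋯ η^0(m_p)|`, the `u`-quotient of a positive integer. -/
def uQuotPos (η : A → List A) (p k : ℕ) (m : ℕ → List A) : ℤ :=
  ∑ j ∈ Finset.range (k - p), ((iterW η j (m (j + p))).length : ℤ)

/-- `w = tail_{η,p,x}(n)`: the digit word of the unique `x`-admissible sequence of
length `p` whose length-sum is `n`. -/
def TailSpec (η : A → List A) (p : ℕ) (x : A) (n : ℕ) (w : List ℕ) : Prop :=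
  ∃ m a, AdmSeq η p m a x ∧ sumLen η p m = n ∧ w = dtDigits p m

/-- Radix order: shorter words first, ties broken lexicographically. -/
def radLt (v w : List ℕ) : Prop :=
  v.length < w.length ∨ (v.length = w.length ∧ List.Lex (· < ·) v w)

/-- Reversed-radix order: longer words first, ties broken lexicographically. -/
def revLt (v w : List ℕ) : Prop :=
  w.length < v.length ∨ (v.length = w.length ∧ List.Lex (· < ·) v w)

/-- The total order `≺` on `{0,1}D*`. -/
def precLt (v w : List ℕ) : Prop :=
  (v.head? = some 1 ∧ w.head? = some 0) ∨
  (v.head? = some 0 ∧ w.head? = some 0 ∧ radLt v w) ∨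
  (v.head? = some 1 ∧ w.head? = some 1 ∧ revLt v w)

/-- The base-2 value `Σ_{i<k} w_i 2^i` of the word `w = w_{k-1} ⋯ w_0`. -/
def natVal2 (w : List ℕ) : ℕ := w.foldl (fun acc d => 2 * acc + d) 0

/-- The two's complement value `Σ_{i<k} w_i 2^i − w_{k-1} 2^k`. -/
def val2c (w : List ℕ) : ℤ := (natVal2 w : ℤ) - (w.headI : ℤ) * 2 ^ w.length

/-- Fibonacci numbers with `F 0 = 1`, `F 1 = 2`. -/
def fib2 : ℕ → ℕ
  | 0 => 1
  | 1 => 2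
  | n + 2 => fib2 (n + 1) + fib2 n

/-- The Fibonacci complement value `Σ_{i<k} w_i F_i − w_{k-1} F_k`
of the word `w = w_{k-1} ⋯ w_0`. -/
def valFc (w : List ℕ) : ℤ :=
  (∑ i ∈ Finset.range w.length, (w.reverse.getD i 0 : ℤ) * fib2 i) -
    (w.headI : ℤ) * fib2 w.length


/-!
Since `u₋₁ = b` and `η^p(u) = u`, the word `η^p(b)` has the form `w b`, so the words
`η^{pt}(b)` are suffixes of `u`, of nondecreasing and (as `b` is growing) unbounded length.
For a `b`-admissible sequence of length `k = p(s+1)`, the concatenation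
`η^{k-1}(m_{k-1}) ⋯ η^0(m_0)` is a proper prefix of `η^k(b) = η^{ps}(w) η^{ps}(b)`, and the
condition on the top `p` digits says exactly that it is shorter than `η^{ps}(w)`. Hence
`u_{-|η^k(b)|} ⋯ u_{n-1}` can only be decomposed with the unique `s` such that
`|η^{ps}(b)| < -n ≤ |η^{p(s+1)}(b)|`. For fixed `k`, the length of the concatenation is a
bijection from admissible sequences onto `[0, |η^k(b)|)`: a longer top digit `m_{k-1}` forces a
longer concatenation, since the rest never exceeds `|η^{k-1}(a_{k-1})|`.
-/

section Substitution

variable (η : A → List A)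

theorem substW_append (v w : List A) : substW η (v ++ w) = substW η v ++ substW η w := by
  simp [substW]

theorem iterW_nil (k : ℕ) : iterW η k [] = [] := by
  induction k with
  | zero => rfl
  | succ k ih => rw [iterW, Function.iterate_succ_apply', ← iterW, ih]; rfl

theorem iterW_append (k : ℕ) (v w : List A) :
    iterW η k (v ++ w) = iterW η k v ++ iterW η k w := by
  induction k generalizing v w with
  | zero => rfl
  | succ k ih => simp only [iterW, Function.iterate_succ_apply, substW_append] at ih ⊢; rw [ih]

theorem iterW_iterW (i j : ℕ) (w : List A) : iterW η i (iterW η j w) = iterW η (i + j) w :=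
  (Function.iterate_add_apply _ _ _ _).symm

theorem iterW_succ_singleton (k : ℕ) (x : A) : iterW η (k + 1) [x] = iterW η k (η x) := by
  simp [iterW, substW]

theorem iterW_one_singleton (x : A) : iterW η 1 [x] = η x :=
  iterW_succ_singleton η 0 x

theorem iterW_flatten (k : ℕ) (L : List (List A)) :
    iterW η k L.flatten = (L.map (iterW η k)).flatten := by
  induction L with
  | nil => exact iterW_nil η k
  | cons v L ih => simp [iterW_append, ih]

theorem List.IsPrefix.iterW {v w : List A} (h : v <+: w) (k : ℕ) :
    _root_.iterW η k v <+: _root_.iterW η k w := by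
  obtain ⟨t, rfl⟩ := h
  rw [iterW_append]
  exact List.prefix_append _ _

theorem iterW_add_of_append_eq {p : ℕ} {w : List A} {x : A} (hw : w ++ [x] = iterW η p [x])
    (j : ℕ) : iterW η (j + p) [x] = iterW η j w ++ iterW η j [x] := by
  rw [← iterW_iterW, ← hw, iterW_append]

theorem monotone_length_iterW_mul {p : ℕ} {x : A} (hx : [x] <:+ iterW η p [x]) :
    Monotone fun t => (iterW η (p * t) [x]).length := by
  obtain ⟨w, hw⟩ := hx
  refine monotone_nat_of_le_succ fun t => ?_
  simp only [Nat.mul_succ, iterW_add_of_append_eq η hw, List.length_append]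
  omega

theorem exists_eq_length_iterW_take_add (k : ℕ) {w : List A} {L : ℕ}
    (hL : L < (iterW η k w).length) :
    ∃ (q : ℕ) (hq : q < w.length) (r : ℕ),
      r < (iterW η k [w[q]]).length ∧ L = (iterW η k (w.take q)).length + r := by
  induction w generalizing L with
  | nil => simp [iterW_nil] at hL
  | cons c w ih =>
    rw [← List.singleton_append, iterW_append, List.length_append] at hL
    by_cases hc : L < (iterW η k [c]).length
    · exact ⟨0, by simp, L, hc, by simp [iterW_nil]⟩
    · obtain ⟨q, hq, r, hr, hLr⟩ := ih (L := L - (iterW η k [c]).length) (by omega)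
      refine ⟨q + 1, by simpa using hq, r, by simpa using hr, ?_⟩
      rw [List.take_succ_cons, ← List.singleton_append, iterW_append, List.length_append]
      omega

end Substitution

section ConcatDT

variable (η : A → List A)

theorem concatDT_succ (k : ℕ) (m : ℕ → List A) :
    concatDT η (k + 1) m = iterW η k (m k) ++ concatDT η k m := by
  simp [concatDT, List.range_succ]

theorem concatDT_congr {k : ℕ} {m m' : ℕ → List A} (h : ∀ j < k, m j = m' j) :
    concatDT η k m = concatDT η k m' := by
  unfold concatDT
  congr 1
  refine List.map_congr_left fun j hj => ?_
  rw [h j (List.mem_range.mp (List.mem_reverse.mp hj))]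

theorem concatDT_add (k p : ℕ) (m : ℕ → List A) :
    concatDT η (k + p) m =
      iterW η k (concatDT η p fun j => m (j + k)) ++ concatDT η k m := by
  simp only [concatDT, List.range_add, List.reverse_append, List.map_append,
    List.flatten_append, iterW_flatten, List.map_map, List.map_reverse]
  congr 3
  refine List.map_congr_left fun j _ => ?_
  simp [iterW_iterW, Nat.add_comm]

theorem flatten_map_range_eq_concatDT (p : ℕ) (m : ℕ → List A) :
    ((List.range p).map fun i => iterW η (p - 1 - i) (m (p - 1 - i))).flatten =
      concatDT η p m := by
  rw [concatDT, List.range_eq_range', List.reverse_range', List.map_map, ← List.range_eq_range']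
  simp [Function.comp_def]

end ConcatDT

namespace AdmSeq

variable {η : A → List A} {k : ℕ} {m m' : ℕ → List A} {a a' : ℕ → A} {x : A}

theorem trunc (h : AdmSeq η k m a x) {j : ℕ} (hj : j < k) : AdmSeq η j m a (a j) := by
  refine ⟨fun i hi => h.1 i (by omega), fun hj1 => ?_⟩
  simpa [Nat.sub_add_cancel hj1] using h.1 (j - 1) (by omega)

theorem top_prefix (h : AdmSeq η (k + 1) m a x) : m k ++ [a k] <+: η x := h.2 (by omega)

theorem shift {p : ℕ} (h : AdmSeq η (k + p) m a x) :
    AdmSeq η p (fun j => m (j + k)) (fun j => a (j + k)) x := by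
  refine ⟨fun i hi => ?_, fun hp => ?_⟩
  · simpa [Nat.add_right_comm i 1 k] using h.1 (i + k) (by omega)
  · simpa [show p - 1 + k = k + p - 1 by omega] using h.2 (by omega)

theorem concatDT_append_prefix (h : AdmSeq η (k + 1) m a x) :
    concatDT η (k + 1) m ++ [a 0] <+: iterW η (k + 1) [x] := by
  induction k generalizing x with
  | zero => rw [iterW_one_singleton]; simpa [concatDT, iterW] using h.top_prefix
  | succ k ih =>
    have hbot := ih (h.trunc (Nat.lt_succ_self _))
    rw [concatDT_succ, List.append_assoc, iterW_succ_singleton]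
    calc iterW η (k + 1) (m (k + 1)) ++ (concatDT η (k + 1) m ++ [a 0])
        <+: iterW η (k + 1) (m (k + 1)) ++ iterW η (k + 1) [a (k + 1)] :=
          (List.prefix_append_right_inj _).mpr hbot
      _ = iterW η (k + 1) (m (k + 1) ++ [a (k + 1)]) := (iterW_append η _ _ _).symm
      _ <+: iterW η (k + 1) (η x) := h.top_prefix.iterW η _

theorem concatDT_prefix (h : AdmSeq η k m a x) : concatDT η k m <+: iterW η k [x] := by
  cases k with
  | zero => exact List.nil_prefix
  | succ k => exact (List.prefix_append _ _).trans h.concatDT_append_prefix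

theorem length_concatDT_lt (h : AdmSeq η k m a x) :
    (concatDT η k m).length < (iterW η k [x]).length := by
  cases k with
  | zero => simp [concatDT, iterW]
  | succ k => simpa using h.concatDT_append_prefix.length_le

theorem length_concatDT_lt_of_length_lt (h : AdmSeq η (k + 1) m a x)
    (h' : AdmSeq η (k + 1) m' a' x) (hlt : (m k).length < (m' k).length) :
    (concatDT η (k + 1) m).length < (concatDT η (k + 1) m').length := by
  have hpre : m k ++ [a k] <+: m' k :=
    List.prefix_of_prefix_length_le h.top_prefix
      ((List.prefix_append _ _).trans h'.top_prefix) (by simpa)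
  have himg := (hpre.iterW η k).length_le
  have hbot := (h.trunc (Nat.lt_succ_self k)).length_concatDT_lt
  rw [iterW_append, List.length_append] at himg
  simp only [concatDT_succ, List.length_append]
  omega

theorem eq_of_length_concatDT_eq (h : AdmSeq η k m a x) (h' : AdmSeq η k m' a' x)
    (hlen : (concatDT η k m).length = (concatDT η k m').length) :
    ∀ i < k, m i = m' i ∧ a i = a' i := by
  induction k generalizing x with
  | zero => intro i hi; omega
  | succ k ih =>
    have hmk : (m k).length = (m' k).length :=
      le_antisymm (not_lt.mp fun hlt => (h'.length_concatDT_lt_of_length_lt h hlt).ne' hlen)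
        (not_lt.mp fun hlt => (h.length_concatDT_lt_of_length_lt h' hlt).ne hlen)
    have htop : m k ++ [a k] = m' k ++ [a' k] :=
      (List.prefix_of_prefix_length_le h.top_prefix h'.top_prefix (by simp [hmk])).eq_of_length
        (by simp [hmk])
    obtain ⟨hm, ha⟩ := List.append_inj' htop rfl
    simp only [List.singleton_inj] at ha
    have hlen' : (concatDT η k m).length = (concatDT η k m').length := by
      simpa [concatDT_succ, hm] using hlen
    intro i hi
    rcases Nat.lt_succ_iff_lt_or_eq.mp hi with hi | rfl
    · exact ih (h.trunc (Nat.lt_succ_self k)) (ha ▸ h'.trunc (Nat.lt_succ_self k)) hlen' i hi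
    · exact ⟨hm, ha⟩

theorem flatten_append_ne_iff {p : ℕ} (hp : 1 ≤ p) (hpk : p ≤ k) (h : AdmSeq η k m a x)
    (hx : [x] <:+ iterW η p [x]) :
    ((List.range p).map fun i => iterW η (p - 1 - i) (m (k - 1 - i))).flatten ++ [a (k - p)]
        ≠ iterW η p [x] ↔
      (concatDT η k m).length + (iterW η (k - p) [x]).length < (iterW η k [x]).length := by
  obtain ⟨j, rfl⟩ := Nat.exists_eq_add_of_le' hpk
  obtain ⟨p, rfl⟩ := Nat.exists_eq_add_of_le' hp
  obtain ⟨w, hw⟩ := hx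
  have hflat : ((List.range (p + 1)).map fun i =>
      iterW η (p + 1 - 1 - i) (m (j + (p + 1) - 1 - i))).flatten =
        concatDT η (p + 1) fun i => m (i + j) := by
    rw [← flatten_map_range_eq_concatDT]
    congr 1
    refine List.map_congr_left fun i hi => ?_
    rw [show j + (p + 1) - 1 - i = p + 1 - 1 - i + j by have := List.mem_range.mp hi; omega]
  have htop : (concatDT η (p + 1) fun i => m (i + j)) ++ [a j] <+: w ++ [x] := by
    simpa [hw] using h.shift.concatDT_append_prefix
  have hbot := (h.trunc (show j < j + (p + 1) by omega)).length_concatDT_lt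
  rw [hflat, Nat.add_sub_cancel, concatDT_add η j, iterW_add_of_append_eq η hw, ← hw]
  simp only [List.length_append]
  constructor
  · intro hne
    have hlt :
        ((concatDT η (p + 1) fun i => m (i + j)) ++ [a j]).length < (w ++ [x]).length :=
      lt_of_le_of_ne htop.length_le fun hl => hne (htop.eq_of_length hl)
    have hpre := List.prefix_of_prefix_length_le htop (List.prefix_append w [x])
      (by simp only [List.length_append, List.length_singleton] at hlt ⊢; omega)
    have himg := (hpre.iterW η j).length_le
    rw [iterW_append, List.length_append] at himg
    omega
  · intro hlt heq
    rw [(List.append_inj' heq rfl).1] at hlt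
    omega

end AdmSeq

theorem exists_admSeq_length_concatDT_eq (η : A → List A) (k : ℕ) {x : A} {L : ℕ}
    (hL : L < (iterW η k [x]).length) :
    ∃ m a, AdmSeq η k m a x ∧ (concatDT η k m).length = L := by
  induction k generalizing x L with
  | zero =>
    have hL0 : L = 0 := by simpa [iterW] using hL
    exact ⟨fun _ => [], fun _ => x, ⟨fun _ _ => by omega, fun _ => by omega⟩, hL0.symm⟩
  | succ k ih =>
    rw [iterW_succ_singleton] at hL
    obtain ⟨q, hq, r, hr, rfl⟩ := exists_eq_length_iterW_take_add η k hL
    obtain ⟨m, a, hadm, hlen⟩ := ih hr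
    refine ⟨Function.update m k ((η x).take q), Function.update a k (η x)[q],
      ⟨?_, ?_⟩, ?_⟩
    · intro i hi
      rw [Function.update_of_ne (by omega), Function.update_of_ne (by omega)]
      rcases Nat.lt_or_ge (i + 1) k with hik | hik
      · rw [Function.update_of_ne (by omega)]
        exact hadm.1 i hik
      · obtain rfl : k = i + 1 := by omega
        simpa using hadm.2 (by omega)
    · simp [List.take_prefix]
    · rw [concatDT_succ, List.length_append, Function.update_self,
        concatDT_congr η fun j hj => Function.update_of_ne (Nat.ne_of_lt hj) _ _, hlen]

def IsLeftSuffixOf (w : List A) (u : ℤ → A) : Prop :=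
  ∀ j : ℕ, j < w.length → w[j]? = some (u ((j : ℤ) - w.length))

theorem isLeftSuffixOf_singleton (u : ℤ → A) : IsLeftSuffixOf [u (-1)] u := by
  intro j hj
  obtain rfl : j = 0 := by simpa using hj
  rfl

namespace LeftPer

variable {η : A → List A} {p : ℕ} {u : ℤ → A}

theorem isLeftSuffixOf_iterW (hper : LeftPer η p u) {w : List A} (hw : IsLeftSuffixOf w u) :
    IsLeftSuffixOf (iterW η p w) u := by
  cases hlen : w.length with
  | zero =>
    rw [List.length_eq_zero_iff.mp hlen, iterW_nil]
    intro j hj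
    simp at hj
  | succ n =>
    have hofn : List.ofFn (fun i : Fin (n + 1) => u ((i : ℤ) - (n + 1))) = w := by
      refine List.ext_getElem (by simp [hlen]) fun i _ hi => ?_
      have := hw i hi
      rw [List.getElem?_eq_getElem hi, hlen] at this
      rw [List.getElem_ofFn, Option.some.inj this]
      push_cast
      rfl
    rw [← hofn]
    exact hper n

theorem isLeftSuffixOf_iterW_mul (hper : LeftPer η p u) (t : ℕ) :
    IsLeftSuffixOf (iterW η (p * t) [u (-1)]) u := by
  induction t with
  | zero => exact isLeftSuffixOf_singleton u
  | succ t ih =>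
    rw [Nat.mul_succ, Nat.add_comm, ← iterW_iterW]
    exact hper.isLeftSuffixOf_iterW ih

theorem singleton_suffix_iterW (hper : LeftPer η p u)
    (hgrow : Tendsto (fun k => (iterW η k [u (-1)]).length) atTop atTop) :
    [u (-1)] <:+ iterW η p [u (-1)] := by
  have hne : iterW η p [u (-1)] ≠ [] := by
    intro hnil
    obtain ⟨K, hK⟩ := eventually_atTop.mp (hgrow.eventually_gt_atTop 0)
    have := hK (K + p) (by omega)
    rw [← iterW_iterW, hnil, iterW_nil] at this
    simp at this
  have hlast := hper.isLeftSuffixOf_iterW (isLeftSuffixOf_singleton u) _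
    (Nat.sub_one_lt (List.length_pos_iff.mpr hne).ne')
  rw [List.singleton_suffix_iff_getLast?_eq_some, List.getLast?_eq_getElem?, hlast]
  congr 2
  have := List.length_pos_iff.mpr hne
  omega

theorem getElem?_concatDT {t : ℕ} {m : ℕ → List A} {a : ℕ → A} (hper : LeftPer η p u)
    (h : AdmSeq η (p * t) m a (u (-1))) {j : ℕ} (hj : j < (concatDT η (p * t) m).length) :
    (concatDT η (p * t) m)[j]? = some (u ((j : ℤ) - (iterW η (p * t) [u (-1)]).length)) := by
  have hpre := h.concatDT_prefix
  have hj' := hj.trans_le hpre.length_le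
  rw [List.getElem?_eq_getElem hj, hpre.getElem hj, ← List.getElem?_eq_getElem hj']
  exact hper.isLeftSuffixOf_iterW_mul t j hj'

end LeftPer

theorem exists_mem_Ioc_succ {α : Type*} [LinearOrder α] {f : ℕ → α} {x : α} (h0 : f 0 < x)
    (h : ∃ t, x ≤ f t) : ∃ s, x ∈ Set.Ioc (f s) (f (s + 1)) := by
  classical
  have hne : Nat.find h ≠ 0 := fun h' => by
    have := Nat.find_spec h
    rw [h'] at this
    exact this.not_gt h0
  obtain ⟨s, hs⟩ := Nat.exists_eq_add_one_of_ne_zero hne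
  refine ⟨s, not_le.mp (Nat.find_min h (by omega)), ?_⟩
  have := Nat.find_spec h
  rwa [hs] at this

theorem Monotone.eq_of_mem_Ioc_succ {α : Type*} [Preorder α] {f : ℕ → α} (hf : Monotone f)
    {x : α} {s t : ℕ} (hs : x ∈ Set.Ioc (f s) (f (s + 1)))
    (ht : x ∈ Set.Ioc (f t) (f (t + 1))) : s = t := by
  rcases lt_trichotomy s t with hlt | heq | hlt
  · exact absurd ht.1 (hs.2.trans (hf hlt)).not_gt
  · exact heq
  · exact absurd hs.1 (ht.2.trans (hf hlt)).not_gt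

theorem dumont_thomas_left_general (η : A → List A)
    (p : ℕ) (hp : 1 ≤ p) (u : ℤ → A)
    (hgrow : Tendsto (fun k => (iterW η k [u (-1)]).length) atTop atTop)
    (hper : LeftPer η p u)
    (n : ℤ) (hn : n ≤ -2) :
    ∃ (k : ℕ) (m : ℕ → List A) (a : ℕ → A),
      (p ∣ k ∧ p ≤ k ∧ AdmSeq η k m a (u (-1)) ∧
        ((List.range p).map (fun i => iterW η (p - 1 - i) (m (k - 1 - i)))).flatten
            ++ [a (k - p)] ≠ iterW η p [u (-1)] ∧
        ((concatDT η k m).length : ℤ) = (iterW η k [u (-1)]).length + n ∧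
        (∀ j : ℕ, j < (concatDT η k m).length →
          (concatDT η k m)[j]? =
            some (u ((j : ℤ) - (iterW η k [u (-1)]).length)))) ∧
      ∀ (k' : ℕ) (m' : ℕ → List A) (a' : ℕ → A),
        (p ∣ k' ∧ p ≤ k' ∧ AdmSeq η k' m' a' (u (-1)) ∧
          ((List.range p).map (fun i => iterW η (p - 1 - i) (m' (k' - 1 - i)))).flatten
              ++ [a' (k' - p)] ≠ iterW η p [u (-1)] ∧
          ((concatDT η k' m').length : ℤ) = (iterW η k' [u (-1)]).length + n ∧
          (∀ j : ℕ, j < (concatDT η k' m').length →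
            (concatDT η k' m')[j]? =
              some (u ((j : ℤ) - (iterW η k' [u (-1)]).length)))) →
        k = k' ∧ ∀ i < k, m i = m' i ∧ a i = a' i := by
  have hx := hper.singleton_suffix_iterW hgrow
  have hmono : Monotone fun t => ((iterW η (p * t) [u (-1)]).length : ℤ) :=
    fun s t hst => Nat.cast_le.mpr (monotone_length_iterW_mul η hx hst)
  have hsub (s : ℕ) : p * (s + 1) - p = p * s := by rw [Nat.mul_succ, Nat.add_sub_cancel]
  obtain ⟨s, hs⟩ : ∃ s, -n ∈ Set.Ioc ((iterW η (p * s) [u (-1)]).length : ℤ)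
      (iterW η (p * (s + 1)) [u (-1)]).length := by
    refine exists_mem_Ioc_succ (show ((1 : ℕ) : ℤ) < -n by omega) ?_
    obtain ⟨K, hK⟩ := eventually_atTop.mp (hgrow.eventually_ge_atTop (-n).toNat)
    exact ⟨K, by have := hK (p * K) (Nat.le_mul_of_pos_left K hp); omega⟩
  have ⟨hs₁, hs₂⟩ := hs
  obtain ⟨m, a, hadm, hlen⟩ := exists_admSeq_length_concatDT_eq η (p * (s + 1))
    (x := u (-1)) (L := ((iterW η (p * (s + 1)) [u (-1)]).length + n).toNat) (by omega)
  have hpk (t : ℕ) : p ≤ p * (t + 1) := Nat.le_mul_of_pos_right p t.succ_pos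
  refine ⟨p * (s + 1), m, a, ⟨dvd_mul_right _ _, hpk s, hadm, ?_, by omega,
    fun j => hper.getElem?_concatDT hadm⟩, ?_⟩
  · rw [hadm.flatten_append_ne_iff hp (hpk s) hx, hsub]
    omega
  · rintro k' m' a' ⟨⟨t', rfl⟩, hpk', hadm', hne', hlen', -⟩
    obtain ⟨s', rfl⟩ := Nat.exists_eq_add_one_of_ne_zero (by rintro rfl; omega : t' ≠ 0)
    rw [hadm'.flatten_append_ne_iff hp hpk' hx, hsub] at hne'
    obtain rfl : s = s' := hmono.eq_of_mem_Ioc_succ hs ⟨by omega, by omega⟩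
    exact ⟨rfl, hadm.eq_of_length_concatDT_eq hadm' (by omega)⟩

/-- Dumont–Thomas theorem for left-infinite periodic points.
If the left part of `u` is a periodic point of `η` of period `p` with growing
seed `b = u (-1)`, then every `n ≤ -2` admits a unique `k` divisible by `p` and
a unique `b`-admissible sequence `(m_i,a_i)_{i=0,…,k-1}` with
`η^{p-1}(m_{k-1}) ⋯ η^0(m_{k-p}) a_{k-p} ≠ η^p(b)` and
`u_{−|η^k(b)|} ⋯ u_{n-1} = η^{k-1}(m_{k-1}) ⋯ η^0(m_0)`. -/
theorem dumont_thomas_left [Finite A] (η : A → List A) (hη : IsSubstitution η)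
    (p : ℕ) (hp : 1 ≤ p) (u : ℤ → A)
    (hgrow : Tendsto (fun k => (iterW η k [u (-1)]).length) atTop atTop)
    (hper : LeftPer η p u)
    (n : ℤ) (hn : n ≤ -2) :
    ∃ (k : ℕ) (m : ℕ → List A) (a : ℕ → A),
      (p ∣ k ∧ p ≤ k ∧ AdmSeq η k m a (u (-1)) ∧
        ((List.range p).map (fun i => iterW η (p - 1 - i) (m (k - 1 - i)))).flatten
            ++ [a (k - p)] ≠ iterW η p [u (-1)] ∧
        ((concatDT η k m).length : ℤ) = (iterW η k [u (-1)]).length + n ∧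
        (∀ j : ℕ, j < (concatDT η k m).length →
          (concatDT η k m)[j]? =
            some (u ((j : ℤ) - (iterW η k [u (-1)]).length)))) ∧
      ∀ (k' : ℕ) (m' : ℕ → List A) (a' : ℕ → A),
        (p ∣ k' ∧ p ≤ k' ∧ AdmSeq η k' m' a' (u (-1)) ∧
          ((List.range p).map (fun i => iterW η (p - 1 - i) (m' (k' - 1 - i)))).flatten
              ++ [a' (k' - p)] ≠ iterW η p [u (-1)] ∧
          ((concatDT η k' m').length : ℤ) = (iterW η k' [u (-1)]).length + n ∧
          (∀ j : ℕ, j < (concatDT η k' m').length →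
            (concatDT η k' m')[j]? =
              some (u ((j : ℤ) - (iterW η k' [u (-1)]).length)))) →
        k = k' ∧ ∀ i < k, m i = m' i ∧ a i = a' i :=
  dumont_thomas_left_general η p hp u hgrow hper n hn
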